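/- (Halting-measurement bound, commuting case.) Let Π₁, …, Π_m be mutually commuting projectors on ℂ^D (m ≥ 1, D ≥ 1). Then for every index a ∈ {1,…,m} and every integer T ≥ 0, the positive semidefinite matrix (1/m) · Σ_{t=0}^{T} (1/mᵗ) · Σ_{(i₁,…,i_t) ∈ {1,…,m}ᵗ} Π_a (I−Π_{i_t}) ⋯ (I−Π_{i₁}) (I/D) (I−Π_{i₁}) ⋯ (I−Π_{i_t}) Π_a is ≤ (1/D) Π_a in the Loewner order; in particular its trace is at most rank(Π_a)/D. -/

import Mathlib

/-
Since the projectors are Hermitian, the term of a word `i` is `(1/D) X* X` with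
`X = (I−Π_{i₁})⋯(I−Π_{i_t}) Π_a`. A product of projectors is a contraction, so `X* X ≤ Π_a`;
and if `a` occurs in the word, commutativity brings `I−Π_a` next to `Π_a`, so `X = 0`.
Only the `(m−1)ᵗ` words avoiding `a` survive, and the total weight
`Σ_{t ≤ T} (m−1)ᵗ/m^{t+1} = 1 − ((m−1)/m)^{T+1}` is at most `1`. The trace bound follows
because the trace of a projector is its rank.
-/

open scoped ComplexOrder

/-- The ordered product `(I−Π_{i_t})⋯(I−Π_{i₁})`. -/
noncomputable def chainRev {D m : ℕ} (P : Fin m → Matrix (Fin D) (Fin D) ℂ)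
    (t : ℕ) (i : Fin t → Fin m) : Matrix (Fin D) (Fin D) ℂ :=
  ((List.finRange t).reverse.map (fun s => 1 - P (i s))).prod

/-- The ordered product `(I−Π_{i₁})⋯(I−Π_{i_t})`. -/
noncomputable def chainFwd {D m : ℕ} (P : Fin m → Matrix (Fin D) (Fin D) ℂ)
    (t : ℕ) (i : Fin t → Fin m) : Matrix (Fin D) (Fin D) ℂ :=
  ((List.finRange t).map (fun s => 1 - P (i s))).prod

/-- The (unnormalised) operator
`(1/m) Σ_{t=0}^{T} (1/mᵗ) Σ_{i₁,…,i_t} Π_a (I−Π_{i_t})⋯(I−Π_{i₁}) (I/D) (I−Π_{i₁})⋯(I−Π_{i_t}) Π_a`. -/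
noncomputable def haltMat {D m : ℕ} (P : Fin m → Matrix (Fin D) (Fin D) ℂ)
    (a : Fin m) (T : ℕ) : Matrix (Fin D) (Fin D) ℂ :=
  ((1 : ℂ) / m) • ∑ t ∈ Finset.range (T + 1),
    ((1 : ℂ) / (m : ℂ) ^ t) • ∑ i : Fin t → Fin m,
      P a * chainRev P t i * (((1 : ℂ) / D) • 1) * chainFwd P t i * P a

open scoped MatrixOrder

section StarOrderedRing

variable {R : Type*} [Ring R] [PartialOrder R] [StarRing R] [StarOrderedRing R]

theorem star_mul_self_list_prod_le_one {l : List R} (hl : ∀ x ∈ l, star x * x ≤ 1) :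
    star l.prod * l.prod ≤ 1 := by
  induction l with
  | nil => simp
  | cons x l ih =>
    calc star (x :: l).prod * (x :: l).prod = star l.prod * (star x * x) * l.prod := by
          simp only [List.prod_cons, star_mul, mul_assoc]
      _ ≤ star l.prod * 1 * l.prod := star_left_conjugate_le_conjugate (hl x (by simp)) _
      _ ≤ 1 := by rw [mul_one]; exact ih fun y hy => hl y (List.mem_cons_of_mem x hy)

theorem IsStarProjection.star_mul_self_le_one {p : R} (hp : IsStarProjection p) :
    star p * p ≤ 1 := by
  rw [hp.isSelfAdjoint.star_eq, hp.isIdempotentElem.eq]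
  exact hp.le_one

theorem IsStarProjection.star_mul_self_mul_le {p x : R} (hp : IsStarProjection p)
    (hx : star x * x ≤ 1) : star (x * p) * (x * p) ≤ p := by
  calc star (x * p) * (x * p) = star p * (star x * x) * p := by
        simp only [star_mul, mul_assoc]
    _ ≤ star p * 1 * p := star_left_conjugate_le_conjugate hx p
    _ = p := by rw [mul_one, hp.isSelfAdjoint.star_eq, hp.isIdempotentElem.eq]

end StarOrderedRing

theorem List.prod_mul_eq_zero_of_mem {M : Type*} [MonoidWithZero M] {l : List M} {x y : M}
    (hy : y ∈ l) (hyx : y * x = 0) (hx : ∀ z ∈ l, Commute z x) : l.prod * x = 0 := by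
  induction l with
  | nil => simp at hy
  | cons z l ih =>
    rw [List.prod_cons, mul_assoc]
    rcases List.mem_cons.mp hy with rfl | hy
    · rw [(Commute.list_prod_left _ _ fun w hw => hx w (List.mem_cons_of_mem _ hw)).eq,
        ← mul_assoc, hyx, zero_mul]
    · rw [ih hy fun w hw => hx w (List.mem_cons_of_mem _ hw), mul_zero]

theorem Matrix.trace_eq_rank_of_isIdempotentElem {K n : Type*} [Field K] [Fintype n]
    [DecidableEq n] {A : Matrix n n K} (hA : IsIdempotentElem A) : A.trace = A.rank := by
  have hlin : IsIdempotentElem (Matrix.toLin' A) := hA.map Matrix.toLinAlgEquiv'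
  rw [Matrix.rank, ← Matrix.trace_toLin'_eq,
    (LinearMap.IsIdempotentElem.isProj_range _ hlin).trace]
  rfl

theorem Matrix.re_trace_le_re_trace {n : Type*} [Fintype n] {A B : Matrix n n ℂ} (h : A ≤ B) :
    A.trace.re ≤ B.trace.re := by
  simpa [Matrix.trace_sub] using (Complex.le_def.mp (Matrix.le_iff.mp h).trace_nonneg).1

theorem sum_pow_sub_one_div_pow_succ {x : ℝ} (hx : x ≠ 0) (n : ℕ) :
    ∑ t ∈ Finset.range n, (x - 1) ^ t / x ^ (t + 1) = 1 - ((x - 1) / x) ^ n := by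
  induction n with
  | zero => simp
  | succ n ih =>
    rw [Finset.sum_range_succ, ih, div_pow, div_pow]
    field_simp
    ring

theorem sum_pow_sub_one_div_pow_succ_le_one {x : ℝ} (hx : 1 ≤ x) (n : ℕ) :
    ∑ t ∈ Finset.range n, (x - 1) ^ t / x ^ (t + 1) ≤ 1 := by
  rw [sum_pow_sub_one_div_pow_succ (by positivity) n]
  have : 0 ≤ ((x - 1) / x) ^ n := by
    have : 0 ≤ x - 1 := by linarith
    positivity
  linarith

section Chains

variable {D m : ℕ} {P : Fin m → Matrix (Fin D) (Fin D) ℂ}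

theorem chainRev_eq_star_chainFwd (hP : ∀ i, IsSelfAdjoint (P i)) (t : ℕ) (i : Fin t → Fin m) :
    chainRev P t i = star (chainFwd P t i) := by
  rw [chainRev, chainFwd, Matrix.star_eq_conjTranspose, Matrix.conjTranspose_list_prod,
    List.map_map, ← List.map_reverse]
  congr 2
  funext s
  simp [← Matrix.star_eq_conjTranspose, (hP (i s)).star_eq]

theorem star_mul_self_chainFwd_le_one (hP : ∀ i, IsStarProjection (P i)) (t : ℕ)
    (i : Fin t → Fin m) : star (chainFwd P t i) * chainFwd P t i ≤ 1 :=
  star_mul_self_list_prod_le_one <| by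
    simpa using fun s => (hP (i s)).one_sub.star_mul_self_le_one

theorem chainFwd_mul_eq_zero (hP : ∀ i, IsStarProjection (P i))
    (hcomm : ∀ i j, Commute (P i) (P j)) {t : ℕ} {i : Fin t → Fin m} {a : Fin m}
    (ha : a ∈ Set.range i) : chainFwd P t i * P a = 0 := by
  obtain ⟨s, rfl⟩ := ha
  refine List.prod_mul_eq_zero_of_mem (y := 1 - P (i s)) (by simp) (hP (i s)).one_sub_mul_self ?_
  simpa using fun s' => (Commute.one_left _).sub_left (hcomm (i s') (i s))

theorem sum_star_mul_self_chainFwd_mul_le (hP : ∀ i, IsStarProjection (P i))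
    (hcomm : ∀ i j, Commute (P i) (P j)) (a : Fin m) (t : ℕ) :
    ∑ i : Fin t → Fin m, star (chainFwd P t i * P a) * (chainFwd P t i * P a)
      ≤ (m - 1) ^ t • P a := by
  classical
  let avoiding := Fintype.piFinset fun _ : Fin t => Finset.univ.erase a
  calc _ = ∑ i ∈ avoiding, star (chainFwd P t i * P a) * (chainFwd P t i * P a) := by
        refine (Finset.sum_subset (Finset.subset_univ _) fun i _ hi => ?_).symm
        have ha : a ∈ Set.range i := by simpa [avoiding, Fintype.mem_piFinset] using hi
        rw [chainFwd_mul_eq_zero hP hcomm ha, mul_zero]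
    _ ≤ avoiding.card • P a := Finset.sum_le_card_nsmul _ _ _ fun i _ =>
        (hP a).star_mul_self_mul_le (star_mul_self_chainFwd_le_one hP t i)
    _ = (m - 1) ^ t • P a := by simp [avoiding, Fintype.card_piFinset]

theorem haltMat_eq (hP : ∀ i, IsSelfAdjoint (P i)) (a : Fin m) (T : ℕ) :
    haltMat P a T = ((1 : ℂ) / D) • ∑ t ∈ Finset.range (T + 1), ((1 : ℂ) / m ^ (t + 1)) •
      ∑ i : Fin t → Fin m, star (chainFwd P t i * P a) * (chainFwd P t i * P a) := by
  simp only [haltMat, chainRev_eq_star_chainFwd hP, star_mul, (hP a).star_eq, Finset.smul_sum,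
    smul_smul, Matrix.mul_smul, Matrix.smul_mul, mul_one, mul_assoc, pow_succ]
  refine Finset.sum_congr rfl fun t _ => Finset.sum_congr rfl fun i _ => ?_
  congr 1
  ring

theorem haltMat_le (hP : ∀ i, IsStarProjection (P i)) (hcomm : ∀ i j, Commute (P i) (P j))
    (a : Fin m) (T : ℕ) : haltMat P a T ≤ ((1 : ℂ) / D) • P a := by
  set weight : ℂ := ∑ t ∈ Finset.range (T + 1), ((m - 1) ^ t : ℕ) / (m : ℂ) ^ (t + 1)
  have hweight : weight ≤ 1 := by
    simp only [weight]
    have h := Complex.real_le_real.mpr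
      (sum_pow_sub_one_div_pow_succ_le_one (x := m) (by exact_mod_cast a.pos) (T + 1))
    push_cast [Nat.cast_sub a.pos] at h ⊢
    exact h
  calc
    haltMat P a T ≤ ((1 : ℂ) / D) • ∑ t ∈ Finset.range (T + 1),
        ((1 : ℂ) / m ^ (t + 1)) • ((m - 1) ^ t • P a) := by
      rw [haltMat_eq fun i => (hP i).isSelfAdjoint]
      gcongr with t
      exact sum_star_mul_self_chainFwd_mul_le hP hcomm a t
    _ = ((1 : ℂ) / D) • weight • P a := by
      simp only [weight, Finset.sum_smul, ← Nat.cast_smul_eq_nsmul ℂ, smul_smul, div_eq_mul_inv,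
        one_mul, mul_comm]
    _ ≤ ((1 : ℂ) / D) • P a := by
      gcongr
      exact smul_le_of_le_one_left (hP a).nonneg hweight

end Chains

theorem halting_measurement_bound_commuting_general
    (D m : ℕ)
    (P : Fin m → Matrix (Fin D) (Fin D) ℂ)
    (hherm : ∀ i, (P i).IsHermitian)
    (hidem : ∀ i, P i * P i = P i)
    (hcomm : ∀ i j, P i * P j = P j * P i)
    (a : Fin m) (T : ℕ) :
    (((1 : ℂ) / D) • P a - haltMat P a T).PosSemidef ∧
    (haltMat P a T).trace.re ≤ ((P a).rank : ℝ) / D := by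
  have hle := haltMat_le (fun i => ⟨hidem i, hherm i⟩) hcomm a T
  refine ⟨hle, ?_⟩
  calc (haltMat P a T).trace.re ≤ (((1 : ℂ) / D) • P a).trace.re :=
        Matrix.re_trace_le_re_trace hle
    _ = ((P a).rank : ℝ) / D := by
      rw [Matrix.trace_smul, Matrix.trace_eq_rank_of_isIdempotentElem (hidem a), smul_eq_mul,
        one_div_mul_eq_div, ← Complex.ofReal_natCast, ← Complex.ofReal_natCast D,
        ← Complex.ofReal_div, Complex.ofReal_re]

/-- **Halting-measurement bound, commuting case.** -/
theorem halting_measurement_bound_commuting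
    (D m : ℕ) (hD : 1 ≤ D) (hm : 1 ≤ m)
    (P : Fin m → Matrix (Fin D) (Fin D) ℂ)
    (hherm : ∀ i, (P i).IsHermitian)
    (hidem : ∀ i, P i * P i = P i)
    (hcomm : ∀ i j, P i * P j = P j * P i)
    (a : Fin m) (T : ℕ) :
    (((1 : ℂ) / D) • P a - haltMat P a T).PosSemidef ∧
    (haltMat P a T).trace.re ≤ ((P a).rank : ℝ) / D :=
  halting_measurement_bound_commuting_general D m P hherm hidem hcomm a T
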